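/- If (a_1, ..., a_m) ≤ (b_1, ..., b_m) in NC_(m)(γ), then (a_1^{-1} b_1, ..., a_m^{-1} b_m) belongs to NC_(m)(γ), and the interval [(a_1,...,a_m), (b_1,...,b_m)] in NC_(m)(γ) is isomorphic as a poset to the interval [(1,...,1), (a_1^{-1} b_1, ..., a_m^{-1} b_m)]. -/

import Mathlib

open CoxeterSystem

/-- The reflection length `l_T` of an element of a Coxeter group: the least `k` such that
`w` is a product of `k` reflections. -/
noncomputable def reflLen {B W : Type*} [Group W] {M : CoxeterMatrix B}
    (cs : CoxeterSystem M W) (w : W) : ℕ :=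
  sInf {k | ∃ l : List W, l.length = k ∧ (∀ t ∈ l, cs.IsReflection t) ∧ l.prod = w}

/-- The absolute order on a Coxeter group: `u ≤ v` iff `l_T(u) + l_T(u⁻¹v) = l_T(v)`. -/
def absLe {B W : Type*} [Group W] {M : CoxeterMatrix B}
    (cs : CoxeterSystem M W) (u v : W) : Prop :=
  reflLen cs u + reflLen cs (u⁻¹ * v) = reflLen cs v

/-- `NC_(m)(δ)`: the set of `m`-tuples `(w_1, …, w_m)` with `w_1 ⋯ w_m ≤ δ` in absolute
order and `l_T(w_1 ⋯ w_m) = Σ l_T(w_i)`. -/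
def NCm {B W : Type*} [Group W] {M : CoxeterMatrix B}
    (cs : CoxeterSystem M W) (δ : W) {m : ℕ} (w : Fin m → W) : Prop :=
  absLe cs ((List.ofFn w).prod) δ ∧
    reflLen cs ((List.ofFn w).prod) = ∑ i, reflLen cs (w i)

section Helpers

variable {B W : Type*} [Group W] {M : CoxeterMatrix B} (cs : CoxeterSystem M W)

lemma reflLen_le {w : W} {l : List W} (h1 : ∀ t ∈ l, cs.IsReflection t)
    (h2 : l.prod = w) : reflLen cs w ≤ l.length :=
  Nat.sInf_le ⟨l, rfl, h1, h2⟩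

lemma exists_reduced (w : W) :
    ∃ l : List W, l.length = reflLen cs w ∧ (∀ t ∈ l, cs.IsReflection t) ∧ l.prod = w := by
  have hne : {k | ∃ l : List W, l.length = k ∧ (∀ t ∈ l, cs.IsReflection t) ∧
      l.prod = w}.Nonempty := by
    obtain ⟨ω, rfl⟩ := cs.wordProd_surjective w
    refine ⟨(ω.map cs.simple).length, ω.map cs.simple, rfl, ?_, rfl⟩
    intro t ht
    rw [List.mem_map] at ht
    obtain ⟨i, -, rfl⟩ := ht
    exact cs.isReflection_simple i
  exact Nat.sInf_mem hne

lemma reflLen_one : reflLen cs (1 : W) = 0 :=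
  Nat.le_zero.mp (reflLen_le cs (l := []) (by simp) (by simp))

lemma eq_one_of_reflLen_eq_zero {w : W} (h : reflLen cs w = 0) : w = 1 := by
  obtain ⟨l, hl, -, hp⟩ := exists_reduced cs w
  rw [h, List.length_eq_zero_iff] at hl
  rw [hl] at hp
  simpa using hp.symm

lemma reflLen_reflection {t : W} (h : cs.IsReflection t) : reflLen cs t = 1 := by
  have h1 : reflLen cs t ≤ 1 := reflLen_le cs (l := [t]) (by simpa) (by simp)
  rcases Nat.le_one_iff_eq_zero_or_eq_one.mp h1 with h0 | h1
  · exfalso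
    obtain ⟨w, i, rfl⟩ := h
    have := eq_one_of_reflLen_eq_zero cs h0
    have hs : cs.simple i = 1 := by
      have := congrArg (fun x => w⁻¹ * x * w) this
      simpa [mul_assoc] using this
    have := cs.length_simple i
    rw [hs, cs.length_one] at this
    exact absurd this (by norm_num)
  · exact h1

lemma reflLen_mul_le (u v : W) : reflLen cs (u * v) ≤ reflLen cs u + reflLen cs v := by
  obtain ⟨lu, hul, hur, hup⟩ := exists_reduced cs u
  obtain ⟨lv, hvl, hvr, hvp⟩ := exists_reduced cs v
  have := reflLen_le cs (l := lu ++ lv)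
    (by intro t ht; rcases List.mem_append.mp ht with h | h; exacts [hur t h, hvr t h])
    (by rw [List.prod_append, hup, hvp])
  simpa [hul, hvl] using this

lemma le_reflLen_add (u v : W) : reflLen cs v ≤ reflLen cs u + reflLen cs (u⁻¹ * v) := by
  have := reflLen_mul_le cs u (u⁻¹ * v)
  simpa using this

lemma absLe_of_le {u v : W} (h : reflLen cs u + reflLen cs (u⁻¹ * v) ≤ reflLen cs v) :
    absLe cs u v :=
  le_antisymm h (le_reflLen_add cs u v)

lemma absLe_refl (u : W) : absLe cs u u := by
  simp [absLe, reflLen_one]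

lemma absLe_one (u : W) : absLe cs 1 u := by
  simp [absLe, reflLen_one]

lemma absLe_trans {u v w : W} (h1 : absLe cs u v) (h2 : absLe cs v w) : absLe cs u w := by
  apply absLe_of_le
  have h3 := reflLen_mul_le cs (u⁻¹ * v) (v⁻¹ * w)
  have h4 : u⁻¹ * w = (u⁻¹ * v) * (v⁻¹ * w) := by group
  rw [h4]
  unfold absLe at h1 h2
  omega

lemma reduced_sublist {L' L : List W} (hsub : L'.Sublist L)
    (hrefl : ∀ t ∈ L, cs.IsReflection t) (hred : reflLen cs L.prod = L.length) :
    reflLen cs L'.prod = L'.length ∧ absLe cs L'.prod L.prod := by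
  induction hsub with
  | slnil => exact ⟨by simp [reflLen_one], absLe_refl cs 1⟩
  | @cons L' L a h ih =>
    have ha : cs.IsReflection a := hrefl a (by simp)
    have hreflL : ∀ t ∈ L, cs.IsReflection t := fun t ht => hrefl t (by simp [ht])
    have hlen : reflLen cs L.prod ≤ L.length := reflLen_le cs hreflL rfl
    rw [List.prod_cons, List.length_cons] at hred
    have hmul : reflLen cs (a * L.prod) ≤ reflLen cs a + reflLen cs L.prod :=
      reflLen_mul_le cs a L.prod
    have hra : reflLen cs a = 1 := reflLen_reflection cs ha
    have hredL : reflLen cs L.prod = L.length := by omega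
    have hconj : reflLen cs (L.prod⁻¹ * (a * L.prod)) = 1 := by
      have h5 : L.prod⁻¹ * (a * L.prod) = L.prod⁻¹ * a * (L.prod⁻¹)⁻¹ := by group
      rw [h5]
      exact reflLen_reflection cs (ha.conj L.prod⁻¹)
    have hPw : absLe cs L.prod (a * L.prod) := by
      unfold absLe
      rw [hconj]
      omega
    obtain ⟨h6, h7⟩ := ih hreflL hredL
    rw [List.prod_cons]
    exact ⟨h6, absLe_trans cs h7 hPw⟩
  | @cons_cons L' L a h ih =>
    have ha : cs.IsReflection a := hrefl a (by simp)
    have hreflL : ∀ t ∈ L, cs.IsReflection t := fun t ht => hrefl t (by simp [ht])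
    have hlen : reflLen cs L.prod ≤ L.length := reflLen_le cs hreflL rfl
    rw [List.prod_cons, List.length_cons] at hred
    have hmul : reflLen cs (a * L.prod) ≤ reflLen cs a + reflLen cs L.prod :=
      reflLen_mul_le cs a L.prod
    have hra : reflLen cs a = 1 := reflLen_reflection cs ha
    have hredL : reflLen cs L.prod = L.length := by omega
    obtain ⟨h6, h7⟩ := ih hreflL hredL
    unfold absLe at h7
    have hup : reflLen cs (a * L'.prod) ≤ reflLen cs a + reflLen cs L'.prod :=
      reflLen_mul_le cs a L'.prod
    have hdown : reflLen cs (a * L.prod) ≤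
        reflLen cs (a * L'.prod) + reflLen cs (L'.prod⁻¹ * L.prod) := by
      have h8 : a * L.prod = (a * L'.prod) * (L'.prod⁻¹ * L.prod) := by group
      rw [h8] at hred ⊢
      exact reflLen_mul_le cs _ _
    have h9 : reflLen cs (a * L'.prod) = L'.length + 1 := by omega
    constructor
    · rw [List.prod_cons, List.length_cons]
      omega
    · unfold absLe
      rw [List.prod_cons, List.prod_cons]
      have h10 : (a * L'.prod)⁻¹ * (a * L.prod) = L'.prod⁻¹ * L.prod := by group
      rw [h10, h9]
      omega

lemma reflLen_prod_le' (l : List W) : reflLen cs l.prod ≤ (l.map (reflLen cs)).sum := by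
  induction l with
  | nil => simp [reflLen_one]
  | cons a l ih =>
    rw [List.prod_cons, List.map_cons, List.sum_cons]
    exact le_trans (reflLen_mul_le cs a l.prod) (by omega)

lemma reflLen_prod_le {m : ℕ} (w : Fin m → W) :
    reflLen cs ((List.ofFn w).prod) ≤ ∑ i, reflLen cs (w i) := by
  have := reflLen_prod_le' cs (List.ofFn w)
  rwa [List.map_ofFn, Fin.sum_ofFn] at this

lemma join_ofFn_sublist {m : ℕ} (f g : Fin m → List W) (h : ∀ i, (f i).Sublist (g i)) :
    (List.ofFn f).flatten.Sublist (List.ofFn g).flatten := by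
  induction m with
  | zero => simp
  | succ n ih =>
    rw [List.ofFn_succ (f := f), List.ofFn_succ (f := g), List.flatten_cons, List.flatten_cons]
    exact (h 0).append (ih _ _ fun i => h i.succ)

lemma prod_join_ofFn {m : ℕ} (f : Fin m → List W) :
    (List.ofFn f).flatten.prod = (List.ofFn fun i => (f i).prod).prod := by
  induction m with
  | zero => simp
  | succ n ih =>
    rw [List.ofFn_succ (f := f), List.ofFn_succ (f := fun i => (f i).prod),
      List.flatten_cons, List.prod_append, List.prod_cons, ih]

lemma length_join_ofFn {m : ℕ} (f : Fin m → List W) :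
    (List.ofFn f).flatten.length = ∑ i, (f i).length := by
  induction m with
  | zero => simp
  | succ n ih =>
    rw [List.ofFn_succ (f := f), List.flatten_cons, List.length_append, ih, Fin.sum_univ_succ]

lemma blocks {m : ℕ} (L L' : Fin m → List W)
    (hsub : ∀ i, (L' i).Sublist (L i))
    (hrefl : ∀ i, ∀ t ∈ L i, cs.IsReflection t)
    (hred : reflLen cs ((List.ofFn fun i => (L i).prod).prod) = ∑ i, (L i).length) :
    (reflLen cs ((List.ofFn fun i => (L' i).prod).prod) = ∑ i, reflLen cs ((L' i).prod)) ∧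
    (∀ i, reflLen cs ((L' i).prod) = (L' i).length) ∧
    absLe cs ((List.ofFn fun i => (L' i).prod).prod) ((List.ofFn fun i => (L i).prod).prod) := by
  have hreflJ : ∀ t ∈ (List.ofFn L).flatten, cs.IsReflection t := by
    intro t ht
    rw [List.mem_flatten] at ht
    obtain ⟨l, hl, htl⟩ := ht
    rw [List.mem_ofFn] at hl
    obtain ⟨i, rfl⟩ := hl
    exact hrefl i t htl
  have hredJ : reflLen cs (List.ofFn L).flatten.prod = (List.ofFn L).flatten.length := by
    rw [prod_join_ofFn, length_join_ofFn]
    exact hred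
  obtain ⟨hred', hle⟩ := reduced_sublist cs (join_ofFn_sublist L' L hsub) hreflJ hredJ
  rw [prod_join_ofFn, length_join_ofFn] at hred'
  rw [prod_join_ofFn, prod_join_ofFn] at hle
  have hcomp : ∀ i, reflLen cs ((L' i).prod) ≤ (L' i).length := fun i =>
    reflLen_le cs (fun t ht => hrefl i t ((hsub i).subset ht)) rfl
  have hsum1 : reflLen cs ((List.ofFn fun i => (L' i).prod).prod) ≤
      ∑ i, reflLen cs ((L' i).prod) := reflLen_prod_le cs _
  have hsum2 : ∑ i, reflLen cs ((L' i).prod) ≤ ∑ i, (L' i).length :=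
    Finset.sum_le_sum fun i _ => hcomp i
  have hsum3 : ∑ i, reflLen cs ((L' i).prod) = ∑ i, (L' i).length := by omega
  refine ⟨by omega, ?_, hle⟩
  intro i
  exact (Finset.sum_eq_sum_iff_of_le fun i _ => hcomp i).mp hsum3 i (Finset.mem_univ i)

lemma absLe_inv_mul {a x y : W} (hax : absLe cs a x) (hay : absLe cs a y)
    (hxy : absLe cs x y) : absLe cs (a⁻¹ * x) (a⁻¹ * y) := by
  unfold absLe at *
  have h1 : (a⁻¹ * x)⁻¹ * (a⁻¹ * y) = x⁻¹ * y := by group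
  rw [h1]
  omega

lemma absLe_of_inv_mul {a x y : W} (hax : absLe cs a x) (hay : absLe cs a y)
    (h : absLe cs (a⁻¹ * x) (a⁻¹ * y)) : absLe cs x y := by
  unfold absLe at *
  have h1 : (a⁻¹ * x)⁻¹ * (a⁻¹ * y) = x⁻¹ * y := by group
  rw [h1] at h
  omega

/-- The master lemma: if `b ∈ NC_(m)(γ)`, `a_i ≤ b_i` and `d_i ≤ a_i⁻¹ b_i` for all `i`, then
`d ∈ NC_(m)(γ)`, `(a_i d_i)_i ∈ NC_(m)(γ)`, and `a_i ≤ a_i d_i ≤ b_i`. -/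
lemma master {m : ℕ} (γ : W) (a b d : Fin m → W) (hb : NCm cs γ b)
    (hab : ∀ i, absLe cs (a i) (b i)) (hd : ∀ i, absLe cs (d i) ((a i)⁻¹ * b i)) :
    NCm cs γ d ∧ NCm cs γ (fun i => a i * d i) ∧ (∀ i, absLe cs (a i) (a i * d i)) ∧
      (∀ i, absLe cs (a i * d i) (b i)) := by
  choose La hLa1 hLa2 hLa3 using fun i => exists_reduced cs (a i)
  choose Ld hLd1 hLd2 hLd3 using fun i => exists_reduced cs (d i)
  choose Le hLe1 hLe2 hLe3 using fun i => exists_reduced cs ((d i)⁻¹ * ((a i)⁻¹ * b i))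
  set L : Fin m → List W := fun i => La i ++ Ld i ++ Le i with hL
  have hLprod : ∀ i, (L i).prod = b i := by
    intro i
    rw [hL]
    simp only [List.prod_append, hLa3, hLd3, hLe3]
    group
  have hLrefl : ∀ i, ∀ t ∈ L i, cs.IsReflection t := by
    intro i t ht
    rw [hL] at ht
    simp only [List.mem_append] at ht
    rcases ht with (ht | ht) | ht
    exacts [hLa2 i t ht, hLd2 i t ht, hLe2 i t ht]
  have hLlen : ∀ i, (L i).length = reflLen cs (b i) := by
    intro i
    have h1 := hab i
    have h2 := hd i
    unfold absLe at h1 h2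
    rw [hL]
    simp only [List.length_append, hLa1, hLd1, hLe1]
    omega
  have hofn : (List.ofFn fun i => (L i).prod) = List.ofFn b :=
    congrArg List.ofFn (funext hLprod)
  have hred : reflLen cs ((List.ofFn fun i => (L i).prod).prod) = ∑ i, (L i).length := by
    rw [hofn, hb.2]
    exact Finset.sum_congr rfl fun i _ => (hLlen i).symm
  -- first application: keep only the d-blocks
  have happ1 := blocks cs L (fun i => Ld i)
    (fun i => ((List.sublist_append_right (La i) (Ld i)).trans
      (List.sublist_append_left (La i ++ Ld i) (Le i))))
    hLrefl hred
  -- second application: keep the a- and d-blocks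
  have happ2 := blocks cs L (fun i => La i ++ Ld i)
    (fun i => List.sublist_append_left (La i ++ Ld i) (Le i))
    hLrefl hred
  have hprod_d : (List.ofFn fun i => (Ld i).prod) = List.ofFn d :=
    congrArg List.ofFn (funext hLd3)
  have hprod_ad : (List.ofFn fun i => (La i ++ Ld i).prod) =
      List.ofFn (fun i => a i * d i) := by
    refine congrArg List.ofFn (funext fun i => ?_)
    rw [List.prod_append, hLa3, hLd3]
  rw [hprod_d, hofn] at happ1
  rw [hprod_ad, hofn] at happ2
  have hBγ : absLe cs ((List.ofFn b).prod) γ := hb.1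
  have had_len : ∀ i, reflLen cs (a i * d i) = reflLen cs (a i) + reflLen cs (d i) := by
    intro i
    have := happ2.2.1 i
    rw [List.prod_append, hLa3, hLd3, List.length_append, hLa1, hLd1] at this
    exact this
  refine ⟨⟨absLe_trans cs happ1.2.2 hBγ, ?_⟩,
    ⟨absLe_trans cs happ2.2.2 hBγ, ?_⟩, ?_, ?_⟩
  · rw [happ1.1]
    exact Finset.sum_congr rfl fun i _ => by rw [hLd3]
  · rw [happ2.1]
    refine Finset.sum_congr rfl fun i _ => ?_
    rw [List.prod_append, hLa3, hLd3]
  · intro i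
    unfold absLe
    have h1 : (a i)⁻¹ * (a i * d i) = d i := by group
    rw [h1, had_len i]
  · intro i
    have hredi : reflLen cs ((L i).prod) = (L i).length := by
      rw [hLprod i, hLlen i]
    have := (reduced_sublist cs (List.sublist_append_left (La i ++ Ld i) (Le i))
      (hLrefl i) hredi).2
    rwa [List.prod_append, hLa3, hLd3, hLprod i] at this

end Helpers

/-- If `(a_1, …, a_m) ≤ (b_1, …, b_m)` in `NC_(m)(γ)`, then
`(a_1⁻¹b_1, …, a_m⁻¹b_m) ∈ NC_(m)(γ)` and the interval `[(a_1,…,a_m), (b_1,…,b_m)]` is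
isomorphic as a poset to the interval `[(1,…,1), (a_1⁻¹b_1, …, a_m⁻¹b_m)]`. -/
theorem NCm_interval_iso {B W : Type*} [Group W] [Finite W] {M : CoxeterMatrix B}
    (cs : CoxeterSystem M W) (γ : W) {m : ℕ} (a b : Fin m → W)
    (ha : NCm cs γ a) (hb : NCm cs γ b) (hab : ∀ i, absLe cs (a i) (b i)) :
    NCm cs γ (fun i => (a i)⁻¹ * b i) ∧
      ∃ e : {c : Fin m → W // NCm cs γ c ∧ (∀ i, absLe cs (a i) (c i)) ∧
              (∀ i, absLe cs (c i) (b i))} ≃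
            {c : Fin m → W // NCm cs γ c ∧ (∀ i, absLe cs 1 (c i)) ∧
              (∀ i, absLe cs (c i) ((a i)⁻¹ * b i))},
        ∀ x y, (∀ i, absLe cs (x.1 i) (y.1 i)) ↔ (∀ i, absLe cs ((e x).1 i) ((e y).1 i)) := by
  have hmain := master cs γ a b (fun i => (a i)⁻¹ * b i) hb hab
    (fun i => absLe_refl cs _)
  refine ⟨hmain.1, ?_⟩
  set c : Fin m → W := fun i => (a i)⁻¹ * b i with hc
  -- forward map
  have fwd : ∀ x : {x : Fin m → W // NCm cs γ x ∧ (∀ i, absLe cs (a i) (x i)) ∧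
      (∀ i, absLe cs (x i) (b i))},
      NCm cs γ (fun i => (a i)⁻¹ * x.1 i) ∧ (∀ i, absLe cs 1 ((a i)⁻¹ * x.1 i)) ∧
      (∀ i, absLe cs ((a i)⁻¹ * x.1 i) (c i)) := by
    intro x
    have h1 := (master cs γ a x.1 (fun i => (a i)⁻¹ * x.1 i) x.2.1 x.2.2.1
      (fun i => absLe_refl cs _)).1
    refine ⟨h1, fun i => absLe_one cs _, fun i => ?_⟩
    exact absLe_inv_mul cs (x.2.2.1 i) (absLe_trans cs (x.2.2.1 i) (x.2.2.2 i)) (x.2.2.2 i)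
  -- backward map
  have bwd : ∀ y : {y : Fin m → W // NCm cs γ y ∧ (∀ i, absLe cs 1 (y i)) ∧
      (∀ i, absLe cs (y i) (c i))},
      NCm cs γ (fun i => a i * y.1 i) ∧ (∀ i, absLe cs (a i) (a i * y.1 i)) ∧
      (∀ i, absLe cs (a i * y.1 i) (b i)) := by
    intro y
    have h1 := master cs γ a b y.1 hb hab y.2.2.2
    exact ⟨h1.2.1, h1.2.2.1, h1.2.2.2⟩
  refine ⟨⟨fun x => ⟨fun i => (a i)⁻¹ * x.1 i, (fwd x).1, (fwd x).2.1, (fwd x).2.2⟩,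
    fun y => ⟨fun i => a i * y.1 i, (bwd y).1, (bwd y).2.1, (bwd y).2.2⟩,
    fun x => Subtype.ext (funext fun i => by simp), fun y => Subtype.ext (funext fun i => by simp),
    ⟩, ?_⟩
  intro x y
  constructor
  · intro h i
    exact absLe_inv_mul cs (x.2.2.1 i) (y.2.2.1 i) (h i)
  · intro h i
    exact absLe_of_inv_mul cs (x.2.2.1 i) (y.2.2.1 i) (h i)
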